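/- Let Q be a finite set and s : Q → ℝ. Then 4 · Σ_{S ⊆ Q} (Σ_{q ∈ S} s q)² = 2^{|Q|} · ((Σ_{q ∈ Q} s q)² + Σ_{q ∈ Q} (s q)²), where the outer sum on the left ranges over all subsets S of Q. -/
import Mathlib

private lemma aux_lin {Q : Type*} [DecidableEq Q] (s : Q → ℝ) (F : Finset Q) :
    2 * ∑ S ∈ F.powerset, (∑ q ∈ S, s q) =
      2 ^ F.card * ∑ q ∈ F, s q := by
  induction F using Finset.induction_on with
  | empty => simp
  | @insert a F h ih =>
    rw [Finset.sum_powerset_insert h]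
    have h2 : ∀ S ∈ F.powerset, (∑ q ∈ insert a S, s q) = s a + ∑ q ∈ S, s q := by
      intro S hS
      rw [Finset.mem_powerset] at hS
      exact Finset.sum_insert (fun ha => h (hS ha))
    rw [Finset.sum_congr rfl h2, Finset.sum_add_distrib, Finset.sum_const,
      Finset.card_powerset, Finset.sum_insert h, Finset.card_insert_of_notMem h,
      pow_succ, nsmul_eq_mul]
    push_cast
    linear_combination 2 * ih

private lemma aux_sq {Q : Type*} [DecidableEq Q] (s : Q → ℝ) (F : Finset Q) :
    4 * ∑ S ∈ F.powerset, (∑ q ∈ S, s q) ^ 2 =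
      2 ^ F.card * ((∑ q ∈ F, s q) ^ 2 + ∑ q ∈ F, (s q) ^ 2) := by
  induction F using Finset.induction_on with
  | empty => simp
  | @insert a F h ih =>
    rw [Finset.sum_powerset_insert h]
    have h2 : ∀ S ∈ F.powerset, (∑ q ∈ insert a S, s q) ^ 2
        = (s a) ^ 2 + 2 * s a * (∑ q ∈ S, s q) + (∑ q ∈ S, s q) ^ 2 := by
      intro S hS
      rw [Finset.mem_powerset] at hS
      rw [Finset.sum_insert (fun ha => h (hS ha))]
      ring
    rw [Finset.sum_congr rfl h2]
    have hlin := aux_lin s F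
    rw [Finset.sum_add_distrib, Finset.sum_add_distrib, Finset.sum_const,
      Finset.card_powerset, Finset.sum_insert h, Finset.sum_insert h,
      Finset.card_insert_of_notMem h, pow_succ, ← Finset.mul_sum]
    simp only [nsmul_eq_mul]
    push_cast
    linear_combination 2 * ih + 4 * s a * hlin

/-- Reduction of the constituent-level second moment to a Q-level score:
`4 · Σ_{S ⊆ Q} (Σ_{q ∈ S} s q)² = 2^{|Q|} · ((Σ_q s q)² + Σ_q (s q)²)`. -/
theorem subset_sum_squares_identity {Q : Type*} [Fintype Q] [DecidableEq Q]
    (s : Q → ℝ) :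
    4 * ∑ S : Finset Q, (∑ q ∈ S, s q) ^ 2 =
      2 ^ (Fintype.card Q) * ((∑ q, s q) ^ 2 + ∑ q, (s q) ^ 2) := by
  have h := aux_sq s (Finset.univ : Finset Q)
  rw [Finset.powerset_univ, Finset.card_univ] at h
  exact h
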